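/- arXiv:2508.12206 — 4 statements merged into one kernel-verified Lean document; each statement's English description precedes it below -/
import Mathlib

section
/- For integrable real random variables A and B, E[min(A,B)] = min(E[A], E[B]) if and only if A ≤ B almost surely or B ≤ A almost surely. -/
open MeasureTheory

theorem integral_min_eq_min_integral_iff
    {Ω : Type*} [MeasurableSpace Ω] (μ : Measure Ω) [IsProbabilityMeasure μ]
    (A B : Ω → ℝ) (hA : Integrable A μ) (hB : Integrable B μ) :
    (∫ ω, min (A ω) (B ω) ∂μ) = min (∫ ω, A ω ∂μ) (∫ ω, B ω ∂μ) ↔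
      (∀ᵐ ω ∂μ, A ω ≤ B ω) ∨ (∀ᵐ ω ∂μ, B ω ≤ A ω) := by
  have hmin : Integrable (fun ω => min (A ω) (B ω)) μ := hA.inf hB
  constructor
  · intro h
    rcases le_total (∫ ω, A ω ∂μ) (∫ ω, B ω ∂μ) with hle | hle
    · left
      rw [min_eq_left hle] at h
      have key := (integral_eq_zero_iff_of_nonneg_ae
        (f := fun ω => A ω - min (A ω) (B ω)) ?_ (hA.sub hmin)).mp ?_
      · filter_upwards [key] with ω hω
        simp only [Pi.zero_apply] at hω
        have : A ω = min (A ω) (B ω) := by linarith [hω]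
        exact min_eq_left_iff.mp this.symm
      · filter_upwards with ω
        simp [min_le_left]
      · rw [integral_sub hA hmin, h, sub_self]
    · right
      rw [min_eq_right hle] at h
      have key := (integral_eq_zero_iff_of_nonneg_ae
        (f := fun ω => B ω - min (A ω) (B ω)) ?_ (hB.sub hmin)).mp ?_
      · filter_upwards [key] with ω hω
        simp only [Pi.zero_apply] at hω
        have : B ω = min (A ω) (B ω) := by linarith [hω]
        exact min_eq_right_iff.mp this.symm
      · filter_upwards with ω
        simp [min_le_right]
      · rw [integral_sub hB hmin, h, sub_self]
  · rintro (h | h)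
    · have h1 : (fun ω => min (A ω) (B ω)) =ᵐ[μ] A := by
        filter_upwards [h] with ω hω using min_eq_left hω
      rw [integral_congr_ae h1, min_eq_left (integral_mono_ae hA hB h)]
    · have h1 : (fun ω => min (A ω) (B ω)) =ᵐ[μ] B := by
        filter_upwards [h] with ω hω using min_eq_right hω
      rw [integral_congr_ae h1, min_eq_right (integral_mono_ae hB hA h)]
end

section
/- Under the assumptions Y = D·Y₁ + (1-D)·Y₀ a.s., P(S = D | G = obs) = 1, (Y₁,Y₀) ⟂ D given G = exp, (Y₁,Y₀,S) ⟂ G, and P(D=d, G=g) > 0 for all d ∈ {0,1}, g ∈ {exp, obs}, the conditional distribution of Y_d given S = d equals the conditional distribution of Y given D = d, G = obs: P(Y_d ≤ y | S = d) = P(Y ≤ y | D = d, G = obs) for all y. -/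
open MeasureTheory

/-- Data source labels: `gexp = 1` (experimental), `gobs = 0` (observational). -/
def gexp : Fin 2 := 1
def gobs : Fin 2 := 0

theorem identification_factual_conditional_cdf
    {Ω : Type*} [MeasurableSpace Ω] (μ : Measure Ω) [IsProbabilityMeasure μ]
    (Y1 Y0 Y : Ω → ℝ) (D S G : Ω → Fin 2)
    (hY1 : Measurable Y1) (hY0 : Measurable Y0) (hY : Measurable Y)
    (hD : Measurable D) (hSm : Measurable S) (hG : Measurable G)
    -- Assumption 1 (potential outcomes)
    (hPO : ∀ᵐ ω ∂μ, Y ω = if D ω = 1 then Y1 ω else Y0 ω)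
    -- Assumption 2 (self-selection): P(S = D | G = obs) = 1
    (hSS : μ {ω | G ω = gobs ∧ S ω = D ω} = μ {ω | G ω = gobs})
    -- Assumption 3 (random assignment): (Y1,Y0) ⟂ D given G = exp
    (hRA : ∀ A : Set (ℝ × ℝ), MeasurableSet A → ∀ d : Fin 2,
      μ {ω | (Y1 ω, Y0 ω) ∈ A ∧ D ω = d ∧ G ω = gexp} * μ {ω | G ω = gexp}
        = μ {ω | (Y1 ω, Y0 ω) ∈ A ∧ G ω = gexp} * μ {ω | D ω = d ∧ G ω = gexp})
    -- Assumption 4 (external validity): (Y1,Y0,S) ⟂ G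
    (hEV : ∀ A : Set (ℝ × ℝ), MeasurableSet A → ∀ s g : Fin 2,
      μ {ω | (Y1 ω, Y0 ω) ∈ A ∧ S ω = s ∧ G ω = g}
        = μ {ω | (Y1 ω, Y0 ω) ∈ A ∧ S ω = s} * μ {ω | G ω = g})
    -- Assumption 5 (overlap)
    (hOL : ∀ d g : Fin 2, 0 < μ {ω | D ω = d ∧ G ω = g}) :
    ∀ d : Fin 2, ∀ y : ℝ,
      (μ {ω | (if d = 1 then Y1 ω else Y0 ω) ≤ y ∧ S ω = d}).toReal
          / (μ {ω | S ω = d}).toReal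
        = (μ {ω | Y ω ≤ y ∧ D ω = d ∧ G ω = gobs}).toReal
          / (μ {ω | D ω = d ∧ G ω = gobs}).toReal := by
  intro d y
  -- a.e., on G = gobs we have S = D
  have hSDset : MeasurableSet {ω | G ω = gobs ∧ S ω = D ω} :=
    (hG (measurableSet_singleton gobs)).inter (measurableSet_eq_fun hSm hD)
  have h2 : ∀ᵐ ω ∂μ, G ω = gobs → S ω = D ω := by
    have hsub : {ω | G ω = gobs ∧ S ω = D ω} ⊆ {ω | G ω = gobs} := fun ω h => h.1
    have hdiff : μ ({ω : Ω | G ω = gobs} \ {ω | G ω = gobs ∧ S ω = D ω}) = 0 := by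
      rw [measure_diff hsub hSDset.nullMeasurableSet (measure_ne_top μ _), hSS, tsub_self]
    rw [Filter.eventually_iff, mem_ae_iff]
    refine measure_mono_null ?_ hdiff
    intro ω hω
    simp only [Set.mem_compl_iff, Set.mem_setOf_eq] at hω
    push_neg at hω
    exact ⟨hω.1, fun hc => hω.2 hc.2⟩
  -- E1
  have E1 : μ {ω | Y ω ≤ y ∧ D ω = d ∧ G ω = gobs}
      = μ {ω | (if d = 1 then Y1 ω else Y0 ω) ≤ y ∧ S ω = d ∧ G ω = gobs} := by
    refine measure_congr (Filter.eventuallyEq_set.2 ?_)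
    filter_upwards [hPO, h2] with ω h1 h2'
    constructor
    · rintro ⟨hy, hd, hg⟩
      rw [hd] at h1
      exact ⟨h1 ▸ hy, (h2' hg).trans hd, hg⟩
    · rintro ⟨hy, hs, hg⟩
      have hd : D ω = d := (h2' hg).symm.trans hs
      rw [hd] at h1
      exact ⟨h1 ▸ hy, hd, hg⟩
  -- E2
  have E2 : μ {ω | D ω = d ∧ G ω = gobs} = μ {ω | S ω = d ∧ G ω = gobs} := by
    refine measure_congr (Filter.eventuallyEq_set.2 ?_)
    filter_upwards [h2] with ω h2'
    exact ⟨fun ⟨hd, hg⟩ => ⟨(h2' hg).trans hd, hg⟩,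
      fun ⟨hs, hg⟩ => ⟨(h2' hg).symm.trans hs, hg⟩⟩
  -- E3 via external validity
  have hA : MeasurableSet {p : ℝ × ℝ | (if d = 1 then p.1 else p.2) ≤ y} := by
    split_ifs
    · exact measurableSet_le measurable_fst measurable_const
    · exact measurableSet_le measurable_snd measurable_const
  have E3 : μ {ω | (if d = 1 then Y1 ω else Y0 ω) ≤ y ∧ S ω = d ∧ G ω = gobs}
      = μ {ω | (if d = 1 then Y1 ω else Y0 ω) ≤ y ∧ S ω = d} * μ {ω | G ω = gobs} := by
    have := hEV {p : ℝ × ℝ | (if d = 1 then p.1 else p.2) ≤ y} hA d gobs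
    simpa using this
  -- E4
  have E4 : μ {ω | S ω = d ∧ G ω = gobs} = μ {ω | S ω = d} * μ {ω | G ω = gobs} := by
    have := hEV Set.univ MeasurableSet.univ d gobs
    simpa using this
  -- positivity of c
  have hpos : 0 < μ {ω | S ω = d} * μ {ω | G ω = gobs} := by
    rw [← E4, ← E2]; exact hOL d gobs
  have hc0 : μ {ω | G ω = gobs} ≠ 0 := by
    intro h; rw [h, mul_zero] at hpos; exact lt_irrefl _ hpos
  have hcR : (μ {ω | G ω = gobs}).toReal ≠ 0 :=
    ENNReal.toReal_ne_zero.mpr ⟨hc0, measure_ne_top μ _⟩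
  rw [E1, E3, E2, E4, ENNReal.toReal_mul, ENNReal.toReal_mul,
    mul_div_mul_right _ _ hcR]
end

section
/- Under the same assumptions (potential outcomes, self-selection S=D on obs, random assignment in exp, external validity, overlap, with trivial covariates), for d ≠ s the counterfactual conditional CDF is identified: P(Y_d ≤ y | S = s) = [P(Y ≤ y | D = d, G = exp) - P(D = d | G = obs)·P(Y ≤ y | D = d, G = obs)] / P(D = s | G = obs). -/
open MeasureTheory

/-! Write `Y_d` for the potential outcome selected by `d`. Random assignment and external validity
make `Y_d` independent of `D` within the experimental sample, so
`P(Y ≤ y | D = d, G = exp) = P(Y_d ≤ y)`. In the observational sample self-selection lets `S`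
stand in for `D`, and external validity then gives `P(Y ≤ y | D = d, G = obs) = P(Y_d ≤ y | S = d)`
and `P(D = k | G = obs) = P(S = k)`. The law of total probability over `S ∈ {d, s}` can then be
solved for `P(Y_d ≤ y | S = s)`. -/

section

variable {Ω : Type*} [MeasurableSpace Ω] {μ : Measure Ω}

lemma measure_setOf_congr_ae {p q : Ω → Prop} (h : ∀ᵐ ω ∂μ, p ω ↔ q ω) :
    μ {ω | p ω} = μ {ω | q ω} :=
  measure_congr (Filter.eventuallyEq_set.2 h)

lemma ae_imp_of_measure_and_eq [IsFiniteMeasure μ] {p q : Ω → Prop}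
    (hpq : NullMeasurableSet {ω | p ω ∧ q ω} μ) (h : μ {ω | p ω ∧ q ω} = μ {ω | p ω}) :
    ∀ᵐ ω ∂μ, p ω → q ω := by
  have hae := ae_eq_of_subset_of_measure_ge (fun _ hω ↦ hω.1) h.ge hpq (measure_ne_top μ _)
  filter_upwards [Filter.eventuallyEq_set.1 hae] with ω hω hp
  exact (hω.2 hp).2

lemma measure_eq_add_of_fin_two {S : Ω → Fin 2} (hS : Measurable S) {d s : Fin 2}
    (hds : d ≠ s) (p : Ω → Prop) :
    μ {ω | p ω} = μ {ω | p ω ∧ S ω = d} + μ {ω | p ω ∧ S ω = s} := by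
  have hne : ∀ k : Fin 2, k ≠ d ↔ k = s := by revert d s; decide
  rw [← measure_inter_add_sdiff {ω | p ω} (hS (measurableSet_singleton d))]
  congr 2
  ext ω
  exact and_congr_right fun _ ↦ hne (S ω)

lemma measure_and_eq_mul_of_forall_fin_two {S : Ω → Fin 2} (hS : Measurable S)
    {p r : Ω → Prop}
    (h : ∀ k, μ {ω | p ω ∧ S ω = k ∧ r ω} = μ {ω | p ω ∧ S ω = k} * μ {ω | r ω}) :
    μ {ω | p ω ∧ r ω} = μ {ω | p ω} * μ {ω | r ω} := by
  have hreorder : ∀ k, {ω | (p ω ∧ r ω) ∧ S ω = k} = {ω | p ω ∧ S ω = k ∧ r ω} :=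
    fun k ↦ Set.ext fun _ ↦ and_right_comm.trans and_assoc
  rw [measure_eq_add_of_fin_two hS zero_ne_one, measure_eq_add_of_fin_two hS zero_ne_one p,
    hreorder, hreorder, h, h, add_mul]

lemma measureReal_div_eq_of_condIndep [IsFiniteMeasure μ] {p q r : Ω → Prop}
    (hcond : μ {ω | p ω ∧ q ω ∧ r ω} * μ {ω | r ω}
      = μ {ω | p ω ∧ r ω} * μ {ω | q ω ∧ r ω})
    (hindep : μ {ω | p ω ∧ r ω} = μ {ω | p ω} * μ {ω | r ω})
    (hqr : μ {ω | q ω ∧ r ω} ≠ 0) :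
    μ.real {ω | p ω ∧ q ω ∧ r ω} / μ.real {ω | q ω ∧ r ω} = μ.real {ω | p ω} := by
  have hr : μ.real {ω | r ω} ≠ 0 := (measureReal_ne_zero_iff (measure_ne_top μ _)).2
    fun h0 ↦ hqr (measure_mono_null (fun _ h ↦ h.2) h0)
  have hqr' : μ.real {ω | q ω ∧ r ω} ≠ 0 :=
    (measureReal_ne_zero_iff (measure_ne_top μ _)).2 hqr
  have h := congrArg ENNReal.toReal (hindep ▸ hcond)
  simp only [ENNReal.toReal_mul, ← measureReal_def] at h
  rw [div_eq_iff hqr']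
  exact mul_right_cancel₀ hr (by linear_combination h)

lemma measureReal_div_eq_div_of_indep {p q r : Ω → Prop}
    (hpq : μ {ω | p ω ∧ q ω ∧ r ω} = μ {ω | p ω ∧ q ω} * μ {ω | r ω})
    (hq : μ {ω | q ω ∧ r ω} = μ {ω | q ω} * μ {ω | r ω}) (hr : μ.real {ω | r ω} ≠ 0) :
    μ.real {ω | p ω ∧ q ω ∧ r ω} / μ.real {ω | q ω ∧ r ω}
      = μ.real {ω | p ω ∧ q ω} / μ.real {ω | q ω} := by
  simp only [measureReal_def, hpq, hq, ENNReal.toReal_mul] at hr ⊢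
  exact mul_div_mul_right _ _ hr

lemma measureReal_div_eq_sub_div [IsFiniteMeasure μ] {S : Ω → Fin 2} (hS : Measurable S)
    {d s : Fin 2} (hds : d ≠ s) (p : Ω → Prop) (hd : μ.real {ω | S ω = d} ≠ 0) :
    μ.real {ω | p ω ∧ S ω = s} / μ.real {ω | S ω = s}
      = (μ.real {ω | p ω} - μ.real {ω | S ω = d} * (μ.real {ω | p ω ∧ S ω = d}
          / μ.real {ω | S ω = d})) / μ.real {ω | S ω = s} := by
  have hsplit :
      μ.real {ω | p ω} = μ.real {ω | p ω ∧ S ω = d} + μ.real {ω | p ω ∧ S ω = s} := by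
    rw [measureReal_def, measure_eq_add_of_fin_two hS hds p,
      ENNReal.toReal_add (measure_ne_top μ _) (measure_ne_top μ _)]
    rfl
  rw [mul_div_cancel₀ _ hd, hsplit, add_sub_cancel_left]

end

theorem identification_counterfactual_conditional_cdf_general
    {Ω : Type*} [MeasurableSpace Ω] (μ : Measure Ω) [IsProbabilityMeasure μ]
    (Y1 Y0 Y : Ω → ℝ) (D S G : Ω → Fin 2)
    (hD : Measurable D) (hSm : Measurable S) (hG : Measurable G)
    -- Assumption 1 (potential outcomes)
    (hPO : ∀ᵐ ω ∂μ, Y ω = if D ω = 1 then Y1 ω else Y0 ω)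
    -- Assumption 2 (self-selection): P(S = D | G = obs) = 1
    (hSS : μ {ω | G ω = gobs ∧ S ω = D ω} = μ {ω | G ω = gobs})
    -- Assumption 3 (random assignment): (Y1,Y0) ⟂ D given G = exp
    (hRA : ∀ A : Set (ℝ × ℝ), MeasurableSet A → ∀ d : Fin 2,
      μ {ω | (Y1 ω, Y0 ω) ∈ A ∧ D ω = d ∧ G ω = gexp} * μ {ω | G ω = gexp}
        = μ {ω | (Y1 ω, Y0 ω) ∈ A ∧ G ω = gexp} * μ {ω | D ω = d ∧ G ω = gexp})
    -- Assumption 4 (external validity): (Y1,Y0,S) ⟂ G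
    (hEV : ∀ A : Set (ℝ × ℝ), MeasurableSet A → ∀ s g : Fin 2,
      μ {ω | (Y1 ω, Y0 ω) ∈ A ∧ S ω = s ∧ G ω = g}
        = μ {ω | (Y1 ω, Y0 ω) ∈ A ∧ S ω = s} * μ {ω | G ω = g})
    -- Assumption 5 (overlap)
    (hOL : ∀ d g : Fin 2, 0 < μ {ω | D ω = d ∧ G ω = g}) :
    ∀ d s : Fin 2, d ≠ s → ∀ y : ℝ,
      (μ {ω | (if d = 1 then Y1 ω else Y0 ω) ≤ y ∧ S ω = s}).toReal
          / (μ {ω | S ω = s}).toReal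
        = ((μ {ω | Y ω ≤ y ∧ D ω = d ∧ G ω = gexp}).toReal
              / (μ {ω | D ω = d ∧ G ω = gexp}).toReal
            - ((μ {ω | D ω = d ∧ G ω = gobs}).toReal / (μ {ω | G ω = gobs}).toReal)
              * ((μ {ω | Y ω ≤ y ∧ D ω = d ∧ G ω = gobs}).toReal
                  / (μ {ω | D ω = d ∧ G ω = gobs}).toReal))
          / ((μ {ω | D ω = s ∧ G ω = gobs}).toReal / (μ {ω | G ω = gobs}).toReal) := by
  intro d s hds y
  have hA : MeasurableSet {p : ℝ × ℝ | (if d = 1 then p.1 else p.2) ≤ y} := by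
    split_ifs <;> exact measurableSet_le (by fun_prop) measurable_const
  have hSD : ∀ᵐ ω ∂μ, G ω = gobs → S ω = D ω :=
    ae_imp_of_measure_and_eq
      ((hG (measurableSet_singleton _)).inter (measurableSet_eq_fun hSm hD)).nullMeasurableSet hSS
  have hEVS : ∀ k g, μ {ω | S ω = k ∧ G ω = g} = μ {ω | S ω = k} * μ {ω | G ω = g} := by
    simpa only [Set.mem_univ, true_and] using hEV Set.univ MeasurableSet.univ
  have hDS : ∀ k, μ {ω | D ω = k ∧ G ω = gobs} = μ {ω | S ω = k ∧ G ω = gobs} := fun k ↦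
    measure_setOf_congr_ae <| by filter_upwards [hSD] with ω h; grind
  have hGobs : (μ {ω | G ω = gobs}).toReal ≠ 0 :=
    (measureReal_ne_zero_iff (measure_ne_top μ _)).2
      fun h0 ↦ (hOL d gobs).ne' (measure_mono_null (fun _ h ↦ h.2) h0)
  have hexp : (μ {ω | Y ω ≤ y ∧ D ω = d ∧ G ω = gexp}).toReal
      / (μ {ω | D ω = d ∧ G ω = gexp}).toReal
      = (μ {ω | (if d = 1 then Y1 ω else Y0 ω) ≤ y}).toReal := by
    rw [measure_setOf_congr_ae
      (q := fun ω ↦ (if d = 1 then Y1 ω else Y0 ω) ≤ y ∧ D ω = d ∧ G ω = gexp)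
      (by filter_upwards [hPO] with ω h; grind)]
    exact measureReal_div_eq_of_condIndep (hRA _ hA d)
      (measure_and_eq_mul_of_forall_fin_two hSm fun k ↦ hEV _ hA k gexp) (hOL d gexp).ne'
  have hobs : (μ {ω | Y ω ≤ y ∧ D ω = d ∧ G ω = gobs}).toReal
      / (μ {ω | D ω = d ∧ G ω = gobs}).toReal
      = (μ {ω | (if d = 1 then Y1 ω else Y0 ω) ≤ y ∧ S ω = d}).toReal
        / (μ {ω | S ω = d}).toReal := by
    rw [measure_setOf_congr_ae
      (q := fun ω ↦ (if d = 1 then Y1 ω else Y0 ω) ≤ y ∧ S ω = d ∧ G ω = gobs)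
      (by filter_upwards [hPO, hSD] with ω h h'; grind), hDS]
    exact measureReal_div_eq_div_of_indep (hEV _ hA d gobs) (hEVS d gobs) hGobs
  have hshare : ∀ k, (μ {ω | D ω = k ∧ G ω = gobs}).toReal / (μ {ω | G ω = gobs}).toReal
      = (μ {ω | S ω = k}).toReal := fun k ↦ by
    rw [hDS, hEVS, ENNReal.toReal_mul, mul_div_cancel_right₀ _ hGobs]
  have hSd : μ.real {ω | S ω = d} ≠ 0 := by
    rw [measureReal_def, ← hshare]
    exact div_ne_zero ((measureReal_ne_zero_iff (measure_ne_top μ _)).2 (hOL d gobs).ne') hGobs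
  rw [hexp, hobs, hshare, hshare]
  exact measureReal_div_eq_sub_div hSm hds _ hSd

theorem identification_counterfactual_conditional_cdf
    {Ω : Type*} [MeasurableSpace Ω] (μ : Measure Ω) [IsProbabilityMeasure μ]
    (Y1 Y0 Y : Ω → ℝ) (D S G : Ω → Fin 2)
    (hY1 : Measurable Y1) (hY0 : Measurable Y0) (hY : Measurable Y)
    (hD : Measurable D) (hSm : Measurable S) (hG : Measurable G)
    -- Assumption 1 (potential outcomes)
    (hPO : ∀ᵐ ω ∂μ, Y ω = if D ω = 1 then Y1 ω else Y0 ω)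
    -- Assumption 2 (self-selection): P(S = D | G = obs) = 1
    (hSS : μ {ω | G ω = gobs ∧ S ω = D ω} = μ {ω | G ω = gobs})
    -- Assumption 3 (random assignment): (Y1,Y0) ⟂ D given G = exp
    (hRA : ∀ A : Set (ℝ × ℝ), MeasurableSet A → ∀ d : Fin 2,
      μ {ω | (Y1 ω, Y0 ω) ∈ A ∧ D ω = d ∧ G ω = gexp} * μ {ω | G ω = gexp}
        = μ {ω | (Y1 ω, Y0 ω) ∈ A ∧ G ω = gexp} * μ {ω | D ω = d ∧ G ω = gexp})
    -- Assumption 4 (external validity): (Y1,Y0,S) ⟂ G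
    (hEV : ∀ A : Set (ℝ × ℝ), MeasurableSet A → ∀ s g : Fin 2,
      μ {ω | (Y1 ω, Y0 ω) ∈ A ∧ S ω = s ∧ G ω = g}
        = μ {ω | (Y1 ω, Y0 ω) ∈ A ∧ S ω = s} * μ {ω | G ω = g})
    -- Assumption 5 (overlap)
    (hOL : ∀ d g : Fin 2, 0 < μ {ω | D ω = d ∧ G ω = g}) :
    ∀ d s : Fin 2, d ≠ s → ∀ y : ℝ,
      (μ {ω | (if d = 1 then Y1 ω else Y0 ω) ≤ y ∧ S ω = s}).toReal
          / (μ {ω | S ω = s}).toReal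
        = ((μ {ω | Y ω ≤ y ∧ D ω = d ∧ G ω = gexp}).toReal
              / (μ {ω | D ω = d ∧ G ω = gexp}).toReal
            - ((μ {ω | D ω = d ∧ G ω = gobs}).toReal / (μ {ω | G ω = gobs}).toReal)
              * ((μ {ω | Y ω ≤ y ∧ D ω = d ∧ G ω = gobs}).toReal
                  / (μ {ω | D ω = d ∧ G ω = gobs}).toReal))
          / ((μ {ω | D ω = s ∧ G ω = gobs}).toReal / (μ {ω | G ω = gobs}).toReal) :=
  identification_counterfactual_conditional_cdf_general μ Y1 Y0 Y D S G hD hSm hG hPO hSS hRA hEV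
    hOL
end

section
/- Conditioning never widens Makarov-type lower bounds: let Z be a discrete random variable, Y₁, Y₀ real random variables, δ ∈ ℝ fixed, and define for each z, L(z) = sup_y max( P(Y₁ ≤ y | Z=z) + P(Y₀ > y - δ | Z=z) - 1, 0 ) and L = sup_y max( P(Y₁ ≤ y) + P(Y₀ > y - δ) - 1, 0 ). Then E[L(Z)] ≥ L. -/
open MeasureTheory

theorem conditioning_improves_makarov_lower_bound
    {Ω α : Type*} [MeasurableSpace Ω] [Fintype α] [MeasurableSpace α]
    [MeasurableSingletonClass α]
    (μ : Measure Ω) [IsProbabilityMeasure μ]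
    (Y1 Y0 : Ω → ℝ) (Z : Ω → α)
    (hY1 : Measurable Y1) (hY0 : Measurable Y0) (hZ : Measurable Z)
    (hpos : ∀ z : α, 0 < μ {ω | Z ω = z}) (δ : ℝ) :
    (⨆ y : ℝ, max ((μ {ω | Y1 ω ≤ y}).toReal + (μ {ω | Y0 ω > y - δ}).toReal - 1) 0)
      ≤ ∑ z : α, (μ {ω | Z ω = z}).toReal *
          (⨆ y : ℝ, max
            ((μ {ω | Y1 ω ≤ y ∧ Z ω = z}).toReal / (μ {ω | Z ω = z}).toReal
              + (μ {ω | Y0 ω > y - δ ∧ Z ω = z}).toReal / (μ {ω | Z ω = z}).toReal - 1) 0) := by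
  have hZz : ∀ z : α, MeasurableSet {ω | Z ω = z} := fun z =>
    hZ (measurableSet_singleton z)
  have hp : ∀ z : α, (0:ℝ) < (μ {ω | Z ω = z}).toReal := fun z =>
    ENNReal.toReal_pos (hpos z).ne' (measure_ne_top μ _)
  -- split of a measurable set along Z
  have split : ∀ s : Set Ω, MeasurableSet s →
      (μ s).toReal = ∑ z : α, (μ (s ∩ {ω | Z ω = z})).toReal := by
    intro s hs
    have h1 : s = ⋃ z : α, s ∩ {ω | Z ω = z} := by
      ext ω; simp
    have hdisj : Pairwise (Function.onFun Disjoint fun z : α => s ∩ {ω | Z ω = z}) := by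
      intro i j hij
      simp only [Function.onFun, Set.disjoint_left]
      rintro ω ⟨_, hi⟩ ⟨_, hj⟩
      exact hij (hi ▸ hj ▸ rfl)
    conv_lhs => rw [h1]
    rw [measure_iUnion hdisj (fun z => hs.inter (hZz z)), tsum_fintype,
      ENNReal.toReal_sum (fun z _ => measure_ne_top μ _)]
  have hsum1 : (1:ℝ) = ∑ z : α, (μ {ω | Z ω = z}).toReal := by
    have := split Set.univ MeasurableSet.univ
    simpa using this
  -- bddAbove of the inner sup: each value ≤ 1
  have hbdd : ∀ z : α, BddAbove (Set.range fun y : ℝ => max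
      ((μ {ω | Y1 ω ≤ y ∧ Z ω = z}).toReal / (μ {ω | Z ω = z}).toReal
        + (μ {ω | Y0 ω > y - δ ∧ Z ω = z}).toReal / (μ {ω | Z ω = z}).toReal - 1) 0) := by
    intro z
    refine ⟨1, ?_⟩
    rintro x ⟨y, rfl⟩
    have h1 : (μ {ω | Y1 ω ≤ y ∧ Z ω = z}).toReal ≤ (μ {ω | Z ω = z}).toReal := by
      apply ENNReal.toReal_mono (measure_ne_top μ _)
      exact measure_mono (fun ω h => h.2)
    have h2 : (μ {ω | Y0 ω > y - δ ∧ Z ω = z}).toReal ≤ (μ {ω | Z ω = z}).toReal := by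
      apply ENNReal.toReal_mono (measure_ne_top μ _)
      exact measure_mono (fun ω h => h.2)
    have hd1 : (μ {ω | Y1 ω ≤ y ∧ Z ω = z}).toReal / (μ {ω | Z ω = z}).toReal ≤ 1 :=
      (div_le_one (hp z)).mpr h1
    have hd2 : (μ {ω | Y0 ω > y - δ ∧ Z ω = z}).toReal / (μ {ω | Z ω = z}).toReal ≤ 1 :=
      (div_le_one (hp z)).mpr h2
    apply max_le _ zero_le_one
    linarith
  apply ciSup_le
  intro y
  have hm1 : MeasurableSet {ω | Y1 ω ≤ y} := hY1 measurableSet_Iic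
  have hm0 : MeasurableSet {ω | Y0 ω > y - δ} := hY0 measurableSet_Ioi
  have e1 : (μ {ω | Y1 ω ≤ y}).toReal
      = ∑ z : α, (μ {ω | Y1 ω ≤ y ∧ Z ω = z}).toReal := by
    rw [split _ hm1]
    congr 1
  have e0 : (μ {ω | Y0 ω > y - δ}).toReal
      = ∑ z : α, (μ {ω | Y0 ω > y - δ ∧ Z ω = z}).toReal := by
    rw [split _ hm0]
    congr 1
  have key : max ((μ {ω | Y1 ω ≤ y}).toReal + (μ {ω | Y0 ω > y - δ}).toReal - 1) 0
      ≤ ∑ z : α, (μ {ω | Z ω = z}).toReal * max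
          ((μ {ω | Y1 ω ≤ y ∧ Z ω = z}).toReal / (μ {ω | Z ω = z}).toReal
            + (μ {ω | Y0 ω > y - δ ∧ Z ω = z}).toReal / (μ {ω | Z ω = z}).toReal - 1) 0 := by
    have term_eq : ∀ z : α, (μ {ω | Z ω = z}).toReal * max
          ((μ {ω | Y1 ω ≤ y ∧ Z ω = z}).toReal / (μ {ω | Z ω = z}).toReal
            + (μ {ω | Y0 ω > y - δ ∧ Z ω = z}).toReal / (μ {ω | Z ω = z}).toReal - 1) 0
        = max ((μ {ω | Y1 ω ≤ y ∧ Z ω = z}).toReal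
            + (μ {ω | Y0 ω > y - δ ∧ Z ω = z}).toReal - (μ {ω | Z ω = z}).toReal) 0 := by
      intro z
      rw [mul_max_of_nonneg _ _ (hp z).le, mul_zero]
      congr 1
      field_simp [(hp z).ne']
    rw [Finset.sum_congr rfl fun z _ => term_eq z]
    calc max ((μ {ω | Y1 ω ≤ y}).toReal + (μ {ω | Y0 ω > y - δ}).toReal - 1) 0
        = max (∑ z : α, ((μ {ω | Y1 ω ≤ y ∧ Z ω = z}).toReal
            + (μ {ω | Y0 ω > y - δ ∧ Z ω = z}).toReal - (μ {ω | Z ω = z}).toReal)) 0 := by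
          rw [e1, e0, Finset.sum_sub_distrib, Finset.sum_add_distrib, ← hsum1]
      _ ≤ ∑ z : α, max ((μ {ω | Y1 ω ≤ y ∧ Z ω = z}).toReal
            + (μ {ω | Y0 ω > y - δ ∧ Z ω = z}).toReal - (μ {ω | Z ω = z}).toReal) 0 := by
          apply max_le
          · exact Finset.sum_le_sum fun z _ => le_max_left _ _
          · exact Finset.sum_nonneg fun z _ => le_max_right _ _
  refine key.trans (Finset.sum_le_sum fun z _ => ?_)
  exact mul_le_mul_of_nonneg_left (le_ciSup (hbdd z) y) (hp z).le
end
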